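/- Let d ≥ 1, α ∈ (1, 2), C_α = Γ(2−α)/(α·(α−1)), and let λ be a finite Borel measure on S^{d−1} concentrated on S^{d−1}_+ = { ξ ∈ ℝ^d : |ξ| = 1, ξ_i ≥ 0 for all i }. Define J_ν(z) = ∫_{S^{d−1}} ∫₀^∞ ( e^{−r·⟨z,ξ⟩} − 1 + r·⟨z,ξ⟩ )·r^{−1−α} dr λ(dξ) for z ∈ [0, +∞)^d, and let G : [0, +∞) → [0, +∞)^d satisfy G(0) = 0. Then the following are equivalent: (i) there exists a Borel measure μ on (0, +∞) with ∫₀^∞ (v ∧ v²) μ(dv) < +∞ such that J_ν(b·G(x)) = x·J_μ(b) for all b, x ≥ 0, where J_μ(b) = ∫₀^∞ (e^{−bv} − 1 + bv) μ(dv); (ii) there exists C ≥ 0 such that ∫_{S^{d−1}} ⟨G(x), ξ⟩^α λ(dξ) = (C/C_α)·x for all x ≥ 0. Moreover, in that case J_μ(b) = C·b^α for all b ≥ 0. -/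

import Mathlib

/-!
Integrating by parts twice gives `∫₀^∞ (e^{-rc} - 1 + rc) r^{-1-α} dr = C_α c^α` for `c ≥ 0`,
so on the positive orthant `J_ν(z) = C_α ∫ ⟨z,ξ⟩^α λ(dξ)`, and `J_ν(b G(x)) = C_α b^α Φ(x)`
with `Φ(x) = ∫ ⟨G(x),ξ⟩^α λ(dξ)`. An identity `C_α b^α Φ(x) = x J_μ(b)` separates the
variables: `b = 1` makes `Φ` linear and `x = 1` gives `J_μ(b) = J_μ(1) b^α`. Conversely, if
`Φ(x) = (C/C_α) x`, the stable Lévy measure `(C/C_α) r^{-1-α} dr` on `(0,∞)` is a valid `μ`,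
by the same integral.
-/

open Real Set MeasureTheory Filter Topology

lemma exp_neg_sub_one_add_nonneg (t : ℝ) : 0 ≤ exp (-t) - 1 + t := by
  linarith [add_one_le_exp (-t)]

lemma exp_neg_sub_one_add_le_min {t : ℝ} (ht : 0 ≤ t) : exp (-t) - 1 + t ≤ min t (t ^ 2) := by
  have hexp : exp (-t) ≤ 1 := exp_le_one_iff.mpr (neg_nonpos.mpr ht)
  refine le_min (by linarith) ?_
  rcases le_or_gt t 1 with ht1 | ht1
  · have := abs_exp_sub_one_sub_id_le (x := -t) (by rwa [abs_neg, abs_of_nonneg ht])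
    rw [neg_sq, sub_neg_eq_add] at this
    exact (le_abs_self _).trans this
  · nlinarith

lemma one_sub_exp_neg_le_min (t : ℝ) : 1 - exp (-t) ≤ min 1 t :=
  le_min (by linarith [exp_pos (-t)]) (by linarith [add_one_le_exp (-t)])

lemma integrableOn_min_mul_rpow {α : ℝ} (hα : α ∈ Ioo 1 2) :
    IntegrableOn (fun r : ℝ => min r (r ^ 2) * r ^ (-1 - α)) (Ioi 0) := by
  rw [← Ioc_union_Ioi_eq_Ioi zero_le_one]
  refine IntegrableOn.union ?_ ?_
  · have h : IntegrableOn (fun r : ℝ => r ^ (1 - α)) (Ioc 0 1) :=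
      (intervalIntegral.intervalIntegrable_rpow' (by linarith [hα.2])).1
    refine h.congr_fun (fun r hr => ?_) measurableSet_Ioc
    rw [min_eq_right (by nlinarith [hr.1, hr.2]), ← rpow_natCast, ← rpow_add hr.1]
    ring_nf
  · refine (integrableOn_Ioi_rpow_of_lt (by linarith [hα.1] : -α < -1) one_pos).congr_fun
      (fun r hr => ?_) measurableSet_Ioi
    have hr1 : (1 : ℝ) < r := hr
    rw [min_eq_left (by nlinarith), ← rpow_one_add' (by linarith) (by linarith [hα.1])]
    ring_nf

lemma integrableOn_exp_neg_sub_one_add_mul_rpow {α : ℝ} (hα : α ∈ Ioo 1 2) :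
    IntegrableOn (fun r : ℝ => (exp (-r) - 1 + r) * r ^ (-1 - α)) (Ioi 0) := by
  refine (integrableOn_min_mul_rpow hα).mono' (by fun_prop) ?_
  filter_upwards [ae_restrict_mem measurableSet_Ioi] with r hr
  have hrpow : 0 ≤ r ^ (-1 - α) := rpow_nonneg (le_of_lt hr) _
  rw [norm_mul, Real.norm_of_nonneg (exp_neg_sub_one_add_nonneg r), Real.norm_of_nonneg hrpow]
  exact mul_le_mul_of_nonneg_right (exp_neg_sub_one_add_le_min (le_of_lt hr)) hrpow

/-- From integrating `(e^{-r} - 1 + r) r^{-1-α}` by parts twice: up to the Gamma integrand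
`e^{-r} r^{1-α} / (α(α-1))` it is an antiderivative, and it vanishes at `0` and at `∞`. -/
noncomputable def stableAntideriv (α r : ℝ) : ℝ :=
  -((exp (-r) - 1 + r) * r ^ (-α) / α + (1 - exp (-r)) * r ^ (1 - α) / (α * (α - 1)))

lemma hasDerivAt_stableAntideriv {α r : ℝ} (hα₀ : α ≠ 0) (hα₁ : α ≠ 1) (hr : 0 < r) :
    HasDerivAt (stableAntideriv α)
      ((exp (-r) - 1 + r) * r ^ (-1 - α) - exp (-r) * r ^ (1 - α) / (α * (α - 1))) r := by
  have hα₁' : α - 1 ≠ 0 := sub_ne_zero.mpr hα₁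
  have he : HasDerivAt (fun r : ℝ => exp (-r)) (-exp (-r)) r := by
    simpa using (hasDerivAt_neg r).exp
  have hφ := (he.sub_const 1).add (hasDerivAt_id r)
  have hψ := he.const_sub 1
  have hp := hasDerivAt_rpow_const (p := -α) (Or.inl hr.ne')
  have hq := hasDerivAt_rpow_const (p := 1 - α) (Or.inl hr.ne')
  refine HasDerivAt.congr_deriv (f := stableAntideriv α)
    (((hφ.mul hp).div_const α).add ((hψ.mul hq).div_const (α * (α - 1)))).neg ?_
  have h1 : r ^ (-α) = r ^ (-1 - α) * r := by
    rw [← rpow_add_one hr.ne']; ring_nf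
  have h2 : r ^ (1 - α) = r ^ (-1 - α) * r * r := by
    rw [← h1, ← rpow_add_one hr.ne']; ring_nf
  have h3 : r ^ (-α - 1) = r ^ (-1 - α) := by ring_nf
  have h4 : r ^ (1 - α - 1) = r ^ (-1 - α) * r := by rw [← h1]; ring_nf
  simp only [h1, h2, h3, h4, Pi.add_apply, id]
  field_simp
  ring

lemma abs_stableAntideriv_le_mul_min {α r : ℝ} (hα : 1 < α) (hr : 0 < r) :
    |stableAntideriv α r| ≤ (1 / α + 1 / (α * (α - 1))) * (min r (r ^ 2) * r ^ (-α)) := by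
  have hα₀ : 0 < α := by linarith
  have hα₁ : 0 < α - 1 := by linarith
  have hp : 0 ≤ r ^ (-α) := rpow_nonneg hr.le _
  have hφ0 := exp_neg_sub_one_add_nonneg r
  have hψ0 : 0 ≤ 1 - exp (-r) := by linarith [exp_le_one_iff.mpr (neg_nonpos.mpr hr.le)]
  have hφ : (exp (-r) - 1 + r) * r ^ (-α) ≤ min r (r ^ 2) * r ^ (-α) :=
    mul_le_mul_of_nonneg_right (exp_neg_sub_one_add_le_min hr.le) hp
  have hψ : (1 - exp (-r)) * r ^ (1 - α) ≤ min r (r ^ 2) * r ^ (-α) := by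
    rw [show 1 - α = -α + 1 by ring, rpow_add_one hr.ne', ← mul_assoc, mul_right_comm]
    gcongr
    calc (1 - exp (-r)) * r ≤ min 1 r * r := by gcongr; exact one_sub_exp_neg_le_min r
      _ = min r (r ^ 2) := by rw [min_mul_of_nonneg _ _ hr.le, one_mul, sq]
  calc |stableAntideriv α r|
      = (exp (-r) - 1 + r) * r ^ (-α) / α + (1 - exp (-r)) * r ^ (1 - α) / (α * (α - 1)) := by
        rw [stableAntideriv, abs_neg, abs_of_nonneg (by positivity)]
    _ ≤ min r (r ^ 2) * r ^ (-α) / α + min r (r ^ 2) * r ^ (-α) / (α * (α - 1)) := by gcongr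
    _ = (1 / α + 1 / (α * (α - 1))) * (min r (r ^ 2) * r ^ (-α)) := by ring

lemma abs_stableAntideriv_le_rpow {α r : ℝ} (hα : 1 < α) (hr : 0 < r) :
    |stableAntideriv α r| ≤ (1 / α + 1 / (α * (α - 1))) * r ^ (1 - α) ∧
      |stableAntideriv α r| ≤ (1 / α + 1 / (α * (α - 1))) * r ^ (2 - α) := by
  have hα₀ : 0 < α := by linarith
  have hα₁ : 0 < α - 1 := by linarith
  have hp : 0 ≤ r ^ (-α) := rpow_nonneg hr.le _
  have h := abs_stableAntideriv_le_mul_min hα hr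
  rw [show 1 - α = -α + 1 by ring, show 2 - α = -α + 2 by ring, rpow_add_one hr.ne',
    rpow_add hr, rpow_two]
  have hK : 0 ≤ 1 / α + 1 / (α * (α - 1)) := by positivity
  refine ⟨h.trans (mul_le_mul_of_nonneg_left ?_ hK), h.trans (mul_le_mul_of_nonneg_left ?_ hK)⟩ <;>
    rw [mul_comm]
  · exact mul_le_mul_of_nonneg_left (min_le_left _ _) hp
  · exact mul_le_mul_of_nonneg_left (min_le_right _ _) hp

lemma stableAntideriv_zero (α : ℝ) : stableAntideriv α 0 = 0 := by
  simp [stableAntideriv]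

lemma tendsto_stableAntideriv_nhdsGT_zero {α : ℝ} (hα : α ∈ Ioo 1 2) :
    Tendsto (stableAntideriv α) (𝓝[>] 0) (𝓝 0) := by
  have hlim : Tendsto (fun r : ℝ => r ^ (2 - α)) (𝓝[>] 0) (𝓝 0) := by
    simpa [zero_rpow (by linarith [hα.2] : 2 - α ≠ 0)] using
      ((continuousAt_rpow_const 0 (2 - α) (Or.inr (by linarith [hα.2]))).tendsto).mono_left
        nhdsWithin_le_nhds
  have hK := hlim.const_mul (1 / α + 1 / (α * (α - 1)))
  rw [mul_zero] at hK
  refine squeeze_zero_norm' ?_ hK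
  filter_upwards [self_mem_nhdsWithin] with r (hr : 0 < r)
  exact (abs_stableAntideriv_le_rpow hα.1 hr).2

lemma tendsto_stableAntideriv_atTop {α : ℝ} (hα : 1 < α) :
    Tendsto (stableAntideriv α) atTop (𝓝 0) := by
  have hlim : Tendsto (fun r : ℝ => r ^ (1 - α)) atTop (𝓝 0) := by
    simpa using tendsto_rpow_neg_atTop (by linarith : 0 < α - 1)
  have hK := hlim.const_mul (1 / α + 1 / (α * (α - 1)))
  rw [mul_zero] at hK
  refine squeeze_zero_norm' ?_ hK
  filter_upwards [eventually_gt_atTop 0] with r hr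
  exact (abs_stableAntideriv_le_rpow hα hr).1

lemma integral_exp_neg_sub_one_add_mul_rpow {α : ℝ} (hα : α ∈ Ioo 1 2) :
    ∫ r in Ioi 0, (exp (-r) - 1 + r) * r ^ (-1 - α) = Gamma (2 - α) / (α * (α - 1)) := by
  have hΓ : IntegrableOn (fun r : ℝ => exp (-r) * r ^ (1 - α) / (α * (α - 1))) (Ioi 0) := by
    rw [show 1 - α = 2 - α - 1 by ring]
    exact (GammaIntegral_convergent (by linarith [hα.2])).div_const _
  have hcont : ContinuousWithinAt (stableAntideriv α) (Ici 0) 0 :=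
    continuousWithinAt_Ioi_iff_Ici.mp (by
      simpa [ContinuousWithinAt, stableAntideriv_zero] using tendsto_stableAntideriv_nhdsGT_zero hα)
  have hFTC := integral_Ioi_of_hasDerivAt_of_tendsto hcont
    (fun r hr => hasDerivAt_stableAntideriv (by linarith [hα.1]) (by linarith [hα.1]) hr)
    ((integrableOn_exp_neg_sub_one_add_mul_rpow hα).sub hΓ) (tendsto_stableAntideriv_atTop hα.1)
  rwa [integral_sub (integrableOn_exp_neg_sub_one_add_mul_rpow hα) hΓ, stableAntideriv_zero,
    sub_zero, sub_eq_zero, integral_div, ← show 2 - α - 1 = 1 - α by ring,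
    ← Gamma_eq_integral (by linarith [hα.2])] at hFTC

lemma integral_exp_neg_mul_sub_one_add_mul_rpow {α c : ℝ} (hα : α ∈ Ioo 1 2) (hc : 0 ≤ c) :
    ∫ r in Ioi 0, (exp (-(r * c)) - 1 + r * c) * r ^ (-1 - α)
      = Gamma (2 - α) / (α * (α - 1)) * c ^ α := by
  rcases hc.eq_or_lt with rfl | hc
  · simp [zero_rpow (by linarith [hα.1] : α ≠ 0)]
  have hscale : ∀ r ∈ Ioi (0 : ℝ), (exp (-(r * c)) - 1 + r * c) * r ^ (-1 - α)
      = c ^ (1 + α) * ((exp (-(r * c)) - 1 + r * c) * (r * c) ^ (-1 - α)) := by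
    intro r hr
    have hc1 : c ^ (1 + α) * c ^ (-1 - α) = 1 := by
      rw [← rpow_add hc, show 1 + α + (-1 - α) = 0 by ring, rpow_zero]
    rw [mul_rpow (le_of_lt hr) hc.le]
    linear_combination (-((exp (-(r * c)) - 1 + r * c) * r ^ (-1 - α))) * hc1
  rw [setIntegral_congr_fun measurableSet_Ioi hscale, integral_const_mul,
    integral_comp_mul_right_Ioi (fun r => (exp (-r) - 1 + r) * r ^ (-1 - α)) 0 hc, zero_mul,
    integral_exp_neg_sub_one_add_mul_rpow hα, smul_eq_mul, rpow_add hc, rpow_one]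
  field_simp

noncomputable def stableLevyMeasure (α : ℝ) : Measure ℝ :=
  (volume.restrict (Ioi 0)).withDensity fun r => ENNReal.ofReal (r ^ (-1 - α))

lemma setLIntegral_min_stableLevyMeasure_lt_top {α : ℝ} (hα : α ∈ Ioo 1 2) :
    ∫⁻ v in Ioi 0, ENNReal.ofReal (min v (v ^ 2)) ∂stableLevyMeasure α < ⊤ := by
  rw [stableLevyMeasure, setLIntegral_withDensity_eq_setLIntegral_mul _ (by fun_prop)
    (by fun_prop) measurableSet_Ioi, Measure.restrict_restrict_of_subset subset_rfl]
  refine lt_of_eq_of_lt (setLIntegral_congr_fun measurableSet_Ioi fun v hv => ?_)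
    (integrableOn_min_mul_rpow hα).lintegral_lt_top
  rw [Pi.mul_apply, mul_comm, ENNReal.ofReal_mul' (rpow_nonneg (le_of_lt hv) _)]

lemma setIntegral_stableLevyMeasure {α b : ℝ} (hα : α ∈ Ioo 1 2) (hb : 0 ≤ b) :
    ∫ v in Ioi 0, (exp (-(b * v)) - 1 + b * v) ∂stableLevyMeasure α
      = Gamma (2 - α) / (α * (α - 1)) * b ^ α := by
  rw [stableLevyMeasure, setIntegral_withDensity_eq_setIntegral_toReal_smul (by fun_prop)
    (ae_of_all _ fun _ => ENNReal.ofReal_lt_top) _ measurableSet_Ioi,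
    Measure.restrict_restrict_of_subset subset_rfl,
    ← integral_exp_neg_mul_sub_one_add_mul_rpow hα hb]
  refine setIntegral_congr_fun measurableSet_Ioi fun v hv => ?_
  rw [ENNReal.toReal_ofReal (rpow_nonneg (le_of_lt hv) _), smul_eq_mul, mul_comm, mul_comm b]

lemma EuclideanSpace.inner_nonneg_of_nonneg {ι : Type*} [Fintype ι] {x y : EuclideanSpace ℝ ι}
    (hx : ∀ i, 0 ≤ x i) (hy : ∀ i, 0 ≤ y i) : 0 ≤ inner ℝ x y := by
  rw [PiLp.inner_apply]
  exact Finset.sum_nonneg fun i _ => by simpa using mul_nonneg (hy i) (hx i)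

section SpectralMeasure

variable {ι : Type*} [Fintype ι] {lam : Measure (EuclideanSpace ℝ ι)} {z : EuclideanSpace ℝ ι}

lemma integral_levyExponent_eq_mul_integral_inner_rpow {α : ℝ} (hα : α ∈ Ioo 1 2)
    (hlam : ∀ᵐ ξ ∂lam, ∀ i, 0 ≤ ξ i) (hz : ∀ i, 0 ≤ z i) :
    ∫ ξ, (∫ r in Ioi 0, (exp (-(r * inner ℝ z ξ)) - 1 + r * inner ℝ z ξ) * r ^ (-1 - α)) ∂lam
      = Gamma (2 - α) / (α * (α - 1)) * ∫ ξ, inner ℝ z ξ ^ α ∂lam := by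
  rw [← integral_const_mul]
  exact integral_congr_ae (hlam.mono fun ξ hξ => integral_exp_neg_mul_sub_one_add_mul_rpow hα
    (EuclideanSpace.inner_nonneg_of_nonneg hz hξ))

lemma integral_inner_smul_rpow {α b : ℝ} (hb : 0 ≤ b) (hlam : ∀ᵐ ξ ∂lam, ∀ i, 0 ≤ ξ i)
    (hz : ∀ i, 0 ≤ z i) :
    ∫ ξ, inner ℝ (b • z) ξ ^ α ∂lam = b ^ α * ∫ ξ, inner ℝ z ξ ^ α ∂lam := by
  rw [← integral_const_mul]
  refine integral_congr_ae (hlam.mono fun ξ hξ => ?_)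
  dsimp only
  rw [real_inner_smul_left, mul_rpow hb (EuclideanSpace.inner_nonneg_of_nonneg hz hξ)]

end SpectralMeasure

lemma eq_mul_and_eq_mul_rpow_of_mul_rpow_mul_eq {α K : ℝ} (hK : K ≠ 0) {Φ L : ℝ → ℝ}
    (h : ∀ b ≥ (0 : ℝ), ∀ x ≥ (0 : ℝ), K * b ^ α * Φ x = x * L b) :
    (∀ x ≥ (0 : ℝ), Φ x = L 1 / K * x) ∧ ∀ b ≥ (0 : ℝ), L b = L 1 * b ^ α := by
  have hΦ : ∀ x ≥ (0 : ℝ), Φ x = L 1 / K * x := fun x hx => by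
    have h1 := h 1 zero_le_one x hx
    rw [one_rpow, mul_one] at h1
    field_simp
    linarith
  refine ⟨hΦ, fun b hb => ?_⟩
  have hb1 := h b hb 1 zero_le_one
  rw [hΦ 1 zero_le_one, one_mul] at hb1
  rw [← hb1]
  field_simp

theorem stmt18_general (d : ℕ) (α : ℝ) (hα : α ∈ Set.Ioo (1:ℝ) 2)
    (lam : Measure (EuclideanSpace ℝ (Fin d)))
    (hsph : lam {ξ : EuclideanSpace ℝ (Fin d) | ‖ξ‖ = 1 ∧ ∀ i, 0 ≤ ξ i}ᶜ = 0)
    (Jν : EuclideanSpace ℝ (Fin d) → ℝ)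
    (hJν : ∀ z : EuclideanSpace ℝ (Fin d), (∀ i, 0 ≤ z i) →
      Jν z = ∫ ξ, (∫ r in Set.Ioi (0:ℝ),
        (Real.exp (-(r * (inner ℝ z ξ : ℝ))) - 1 + r * (inner ℝ z ξ : ℝ))
          * r ^ (-1 - α)) ∂lam)
    (G : ℝ → EuclideanSpace ℝ (Fin d))
    (hGnn : ∀ x ≥ (0:ℝ), ∀ i, 0 ≤ G x i) :
    ((∃ μ : Measure ℝ,
        (∫⁻ v in Set.Ioi (0:ℝ), ENNReal.ofReal (min v (v ^ 2)) ∂μ < ⊤) ∧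
        ∀ b ≥ (0:ℝ), ∀ x ≥ (0:ℝ),
          Jν (b • G x)
            = x * ∫ v in Set.Ioi (0:ℝ), (Real.exp (-(b * v)) - 1 + b * v) ∂μ) ↔
      (∃ C ≥ (0:ℝ), ∀ x ≥ (0:ℝ),
        (∫ ξ, (inner ℝ (G x) ξ : ℝ) ^ α ∂lam)
          = (C / (Real.Gamma (2 - α) / (α * (α - 1)))) * x)) ∧
    (∀ μ : Measure ℝ,
      (∫⁻ v in Set.Ioi (0:ℝ), ENNReal.ofReal (min v (v ^ 2)) ∂μ < ⊤) →
      (∀ b ≥ (0:ℝ), ∀ x ≥ (0:ℝ),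
        Jν (b • G x)
          = x * ∫ v in Set.Ioi (0:ℝ), (Real.exp (-(b * v)) - 1 + b * v) ∂μ) →
      ∃ C ≥ (0:ℝ),
        (∀ x ≥ (0:ℝ),
          (∫ ξ, (inner ℝ (G x) ξ : ℝ) ^ α ∂lam)
            = (C / (Real.Gamma (2 - α) / (α * (α - 1)))) * x) ∧
        ∀ b ≥ (0:ℝ),
          (∫ v in Set.Ioi (0:ℝ), (Real.exp (-(b * v)) - 1 + b * v) ∂μ)
            = C * b ^ α) := by
  set Cα := Gamma (2 - α) / (α * (α - 1))
  have hCα : 0 < Cα := div_pos (Gamma_pos_of_pos (by linarith [hα.2]))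
    (mul_pos (by linarith [hα.1]) (by linarith [hα.1]))
  have hlam : ∀ᵐ ξ ∂lam, ∀ i, 0 ≤ ξ i := (ae_iff.2 hsph).mono fun _ hξ => hξ.2
  have hJ : ∀ b ≥ (0:ℝ), ∀ x ≥ (0:ℝ),
      Jν (b • G x) = Cα * b ^ α * ∫ ξ, inner ℝ (G x) ξ ^ α ∂lam := by
    intro b hb x hx
    have hbG : ∀ i, 0 ≤ (b • G x) i := fun i => mul_nonneg hb (hGnn x hx i)
    rw [hJν _ hbG, integral_levyExponent_eq_mul_integral_inner_rpow hα hlam hbG,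
      integral_inner_smul_rpow hb hlam (hGnn x hx), mul_assoc]
  have hnec : ∀ μ : Measure ℝ, (∀ b ≥ (0:ℝ), ∀ x ≥ (0:ℝ),
        Jν (b • G x) = x * ∫ v in Ioi 0, (exp (-(b * v)) - 1 + b * v) ∂μ) →
      ∃ C ≥ (0:ℝ), (∀ x ≥ (0:ℝ), ∫ ξ, inner ℝ (G x) ξ ^ α ∂lam = C / Cα * x) ∧
        ∀ b ≥ (0:ℝ), ∫ v in Ioi 0, (exp (-(b * v)) - 1 + b * v) ∂μ = C * b ^ α := fun μ hμ =>
    ⟨_, setIntegral_nonneg measurableSet_Ioi fun v _ => exp_neg_sub_one_add_nonneg _,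
      eq_mul_and_eq_mul_rpow_of_mul_rpow_mul_eq hCα.ne'
        fun b hb x hx => (hJ b hb x hx).symm.trans (hμ b hb x hx)⟩
  refine ⟨⟨fun ⟨μ, _, hμ⟩ => ?_, fun ⟨C, hC, hΦ⟩ => ?_⟩, fun μ _ => hnec μ⟩
  · obtain ⟨C, hC, hΦ, -⟩ := hnec μ hμ
    exact ⟨C, hC, hΦ⟩
  · refine ⟨ENNReal.ofReal (C / Cα) • stableLevyMeasure α, ?_, fun b hb x hx => ?_⟩
    · rw [setLIntegral_smul_measure]
      exact ENNReal.mul_lt_top ENNReal.ofReal_lt_top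
        (setLIntegral_min_stableLevyMeasure_lt_top hα)
    · rw [Measure.restrict_smul, integral_smul_measure, setIntegral_stableLevyMeasure hα hb,
        ENNReal.toReal_ofReal (div_nonneg hC hCα.le), hJ b hb x hx, hΦ x hx, smul_eq_mul]
      ring

/-- For an `α`-stable spherical Lévy exponent `J_ν` whose spherical measure is
concentrated on the positive-orthant part of the unit sphere, and `G ≥ 0` with
`G(0) = 0`: there is a measure `μ` with `∫ (v ∧ v²) μ(dv) < ∞` and
`J_ν(bG(x)) = x·J_μ(b)` iff `∫ ⟨G(x),ξ⟩^α λ(dξ) = (C/C_α)·x` for some `C ≥ 0`;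
moreover, in that case `J_μ(b) = C·b^α`. -/
theorem stmt18 (d : ℕ) (hd : 1 ≤ d) (α : ℝ) (hα : α ∈ Set.Ioo (1:ℝ) 2)
    (lam : Measure (EuclideanSpace ℝ (Fin d))) [IsFiniteMeasure lam]
    (hsph : lam {ξ : EuclideanSpace ℝ (Fin d) | ‖ξ‖ = 1 ∧ ∀ i, 0 ≤ ξ i}ᶜ = 0)
    (Jν : EuclideanSpace ℝ (Fin d) → ℝ)
    (hJν : ∀ z : EuclideanSpace ℝ (Fin d), (∀ i, 0 ≤ z i) →
      Jν z = ∫ ξ, (∫ r in Set.Ioi (0:ℝ),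
        (Real.exp (-(r * (inner ℝ z ξ : ℝ))) - 1 + r * (inner ℝ z ξ : ℝ))
          * r ^ (-1 - α)) ∂lam)
    (G : ℝ → EuclideanSpace ℝ (Fin d))
    (hGnn : ∀ x ≥ (0:ℝ), ∀ i, 0 ≤ G x i)
    (hG0 : G 0 = 0) :
    ((∃ μ : Measure ℝ,
        (∫⁻ v in Set.Ioi (0:ℝ), ENNReal.ofReal (min v (v ^ 2)) ∂μ < ⊤) ∧
        ∀ b ≥ (0:ℝ), ∀ x ≥ (0:ℝ),
          Jν (b • G x)
            = x * ∫ v in Set.Ioi (0:ℝ), (Real.exp (-(b * v)) - 1 + b * v) ∂μ) ↔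
      (∃ C ≥ (0:ℝ), ∀ x ≥ (0:ℝ),
        (∫ ξ, (inner ℝ (G x) ξ : ℝ) ^ α ∂lam)
          = (C / (Real.Gamma (2 - α) / (α * (α - 1)))) * x)) ∧
    (∀ μ : Measure ℝ,
      (∫⁻ v in Set.Ioi (0:ℝ), ENNReal.ofReal (min v (v ^ 2)) ∂μ < ⊤) →
      (∀ b ≥ (0:ℝ), ∀ x ≥ (0:ℝ),
        Jν (b • G x)
          = x * ∫ v in Set.Ioi (0:ℝ), (Real.exp (-(b * v)) - 1 + b * v) ∂μ) →
      ∃ C ≥ (0:ℝ),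
        (∀ x ≥ (0:ℝ),
          (∫ ξ, (inner ℝ (G x) ξ : ℝ) ^ α ∂lam)
            = (C / (Real.Gamma (2 - α) / (α * (α - 1)))) * x) ∧
        ∀ b ≥ (0:ℝ),
          (∫ v in Set.Ioi (0:ℝ), (Real.exp (-(b * v)) - 1 + b * v) ∂μ)
            = C * b ^ α) :=
  stmt18_general d α hα lam hsph Jν hJν G hGnn
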